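/- Let A = D + UV^* ∈ ℂ^{n×n} with D a real diagonal matrix and U, V ∈ ℂ^{n×k}, and assume A_{i1} ≠ 0 for some i ≥ 3. Let G_2, …, G_{n−1} be Givens rotations (G_i acting on rows i and i+1) such that Q_1 = G_2 G_3 ⋯ G_{n−1} satisfies Q_1 A e_1 = α e_1 + β e_2 for some α, β ∈ ℂ. Then the trailing principal submatrix Â_1 = (Q_1 A Q_1^*)[2:n, 2:n] of size n−1 is lower-quasiseparable of rank k: rank(Â_1[i+1:n−1, 1:i]) ≤ k for every i = 1,…,n−2. -/

import Mathlib

open Matrix BigOperators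

/-- `A` is lower-quasiseparable of rank `k`:
`rank (A[i+1:m, 1:i]) ≤ k` for every `i = 1, …, m-1` (MATLAB notation). -/
noncomputable def lowQS {m : ℕ} (k : ℕ) (A : Matrix (Fin m) (Fin m) ℂ) : Prop :=
  ∀ i : ℕ, ∀ _hi : 0 < i, ∀ _him : i < m,
    (Matrix.of fun (p : Fin (m - i)) (q : Fin i) =>
      A ⟨i + p.1, by have := p.2; omega⟩ ⟨q.1, by have := q.2; omega⟩).rank ≤ k

/-- `G` is the Givens rotation acting on (0-indexed) rows `i` and `i+1` with
parameters `c ∈ ℝ`, `s ∈ ℂ`, `c² + |s|² = 1`. -/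
def IsGivensAt {n : ℕ} (i : ℕ) (c : ℝ) (s : ℂ) (G : Matrix (Fin n) (Fin n) ℂ) : Prop :=
  i + 1 < n ∧ c ^ 2 + ‖s‖ ^ 2 = 1 ∧
  ∀ p q : Fin n,
    G p q =
      if (p : ℕ) = i ∧ (q : ℕ) = i then (c : ℂ)
      else if (p : ℕ) = i ∧ (q : ℕ) = i + 1 then s
      else if (p : ℕ) = i + 1 ∧ (q : ℕ) = i then -((starRingEnd ℂ) s)
      else if (p : ℕ) = i + 1 ∧ (q : ℕ) = i + 1 then (c : ℂ)
      else if p = q then 1 else 0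

/-! Split `Q₁ = L * R` at the pivot `t`, where `L` (the rotations before `t`) is the identity
outside the indices `≤ t` and `R` (the rotations from `t` on) is the identity outside the indices
`≥ t`. In the lower-left block (rows `> t`, columns `≤ t`) of `Q₁ D Q₁ᴴ`, the rows `> t` of `L`
are unit rows and only column `t` of `Lᴴ` meets a nonzero entry of `R D Rᴴ`, so this block is an
outer product. The block of `(Q₁ U) (Q₁ V)ᴴ` has rank at most that of the rows of `Q₁ U` below `t`,
which annihilate `w = conj (V row 0) ≠ 0`: `Q₁ U w = Q₁ A e₀ - d₀ Q₁ e₀` vanishes below its second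
entry. Hence the rank is at most `1 + (k - 1)`. -/

namespace Matrix

variable {ι R : Type*} [DecidableEq ι]

def IsIdentityOutside [Zero R] [One R] (S : Set ι) (M : Matrix ι ι R) : Prop :=
  ∀ p q, p ∉ S ∨ q ∉ S → M p q = (1 : Matrix ι ι R) p q

namespace IsIdentityOutside

variable {S T : Set ι}

theorem mono [Zero R] [One R] {M : Matrix ι ι R} (hM : IsIdentityOutside S M) (hST : S ⊆ T) :
    IsIdentityOutside T M := fun p q hpq =>
  hM p q (hpq.imp (fun h hp => h (hST hp)) (fun h hq => h (hST hq)))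

theorem conjTranspose [Semiring R] [StarRing R] {M : Matrix ι ι R} (hM : IsIdentityOutside S M) :
    IsIdentityOutside S Mᴴ := fun p q hpq => by
  rw [conjTranspose_apply, hM q p hpq.symm, ← conjTranspose_apply, conjTranspose_one]

variable [Fintype ι] [NonAssocSemiring R] {M : Matrix ι ι R}

theorem mul_apply_of_notMem_left {κ : Type*} (hM : IsIdentityOutside S M) (X : Matrix ι κ R)
    {p : ι} (hp : p ∉ S) (q : κ) : (M * X) p q = X p q := by
  rw [mul_apply]
  simp [hM p _ (Or.inl hp), one_apply]

theorem mul_apply_of_notMem_right {κ : Type*} (hM : IsIdentityOutside S M) (X : Matrix κ ι R)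
    (p : κ) {q : ι} (hq : q ∉ S) : (X * M) p q = X p q := by
  rw [mul_apply]
  simp [hM _ q (Or.inr hq), one_apply]

theorem mul {N : Matrix ι ι R} (hM : IsIdentityOutside S M) (hN : IsIdentityOutside S N) :
    IsIdentityOutside S (M * N) := by
  rintro p q (hp | hq)
  · rw [hM.mul_apply_of_notMem_left N hp, hN p q (Or.inl hp)]
  · rw [hN.mul_apply_of_notMem_right M p hq, hM p q (Or.inr hq)]

theorem list_prod {l : List (Matrix ι ι R)} (hl : ∀ M ∈ l, IsIdentityOutside S M) :
    IsIdentityOutside S l.prod := by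
  induction l with
  | nil => exact fun _ _ _ => rfl
  | cons M l ih =>
    rw [List.prod_cons]
    exact (hl M List.mem_cons_self).mul (ih fun N hN => hl N (List.mem_cons_of_mem M hN))

end IsIdentityOutside

section Rank

variable {m n K : Type*} [Fintype n] [Field K]

theorem rank_add_le (X Y : Matrix m n K) : (X + Y).rank ≤ X.rank + Y.rank := by
  rw [rank, rank, rank, mulVecLin_add]
  exact (Submodule.finrank_mono (LinearMap.range_add_le _ _)).trans
    (Submodule.finrank_add_le_finrank_add_finrank _ _)

theorem rank_lt_card_width_of_mulVec_eq_zero {M : Matrix m n K} {w : n → K} (hw : w ≠ 0)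
    (hMw : M *ᵥ w = 0) : M.rank < Fintype.card n := by
  have hker : 0 < Module.finrank K (LinearMap.ker M.mulVecLin) :=
    Module.finrank_pos_iff_exists_ne_zero.mpr ⟨⟨w, hMw⟩, fun h => hw (congrArg Subtype.val h)⟩
  have := LinearMap.finrank_range_add_finrank_ker M.mulVecLin
  rw [Module.finrank_fintype_fun_eq_card] at this
  rw [rank]
  omega

end Rank

variable {ι K : Type*} [Fintype ι] [LinearOrder ι] [Field K] [StarRing K]

theorem mul_diagonal_mul_conjTranspose_apply_of_lt_of_le {L R : Matrix ι ι K} {t : ι}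
    (hL : IsIdentityOutside (Set.Iic t) L) (hR : IsIdentityOutside (Set.Ici t) R) (d : ι → K)
    {p q : ι} (hp : t < p) (hq : q ≤ t) :
    (L * R * diagonal d * (L * R)ᴴ) p q = (R * diagonal d * Rᴴ) p t * star (L q t) := by
  rw [conjTranspose_mul, show L * R * diagonal d * (Rᴴ * Lᴴ) = L * (R * diagonal d * Rᴴ * Lᴴ) by
      simp only [Matrix.mul_assoc],
    hL.mul_apply_of_notMem_left _ (not_le.mpr hp), mul_apply, Finset.sum_eq_single t]
  · rfl
  · intro j _ hjt
    rcases lt_or_gt_of_ne hjt with hj | hj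
    · rw [hR.conjTranspose.mul_apply_of_notMem_right _ _ (not_le.mpr hj), mul_diagonal,
        hR p j (Or.inr (not_le.mpr hj)), one_apply_ne (hj.trans hp).ne', zero_mul, zero_mul]
    · rw [conjTranspose_apply, hL q j (Or.inr (not_le.mpr hj)), one_apply_ne (hq.trans_lt hj).ne,
        star_zero, mul_zero]
  · simp

theorem rank_submatrix_mul_diagonal_add_mul_conjTranspose_le {κ α β : Type*} [Fintype κ]
    [Fintype β] {Q L R : Matrix ι ι K} {t : ι} (hQ : Q = L * R)
    (hL : IsIdentityOutside (Set.Iic t) L) (hR : IsIdentityOutside (Set.Ici t) R)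
    (d : ι → K) (U V : Matrix ι κ K) {f : α → ι} {g : β → ι} (hf : ∀ a, t < f a)
    (hg : ∀ b, g b ≤ t) {j : ι} (hVj : V j ≠ 0) (hQUV : ∀ a, (Q * (U * Vᴴ)) (f a) j = 0) :
    ((Q * (diagonal d + U * Vᴴ) * Qᴴ).submatrix f g).rank ≤ Fintype.card κ := by
  set P := (Q * U).submatrix f id
  have hD : (Q * diagonal d * Qᴴ).submatrix f g =
      vecMulVec (fun a => (R * diagonal d * Rᴴ) (f a) t) (fun b => star (L (g b) t)) := by
    ext a b
    rw [submatrix_apply, hQ, vecMulVec_apply]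
    exact mul_diagonal_mul_conjTranspose_apply_of_lt_of_le hL hR d (hf a) (hg b)
  have hUV : (Q * (U * Vᴴ) * Qᴴ).submatrix f g = P * (Q * V)ᴴ.submatrix id g := by
    rw [← submatrix_mul _ _ _ _ _ Function.bijective_id]
    simp only [conjTranspose_mul, Matrix.mul_assoc]
  have hPV : P *ᵥ star (V j) = 0 := funext fun a => by
    rw [Pi.zero_apply, ← hQUV a, ← Matrix.mul_assoc, mul_apply]
    rfl
  have hP := rank_lt_card_width_of_mulVec_eq_zero (star_ne_zero.mpr hVj) hPV
  calc _ ≤ 1 + P.rank := by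
        rw [show Q * (diagonal d + U * Vᴴ) * Qᴴ = Q * diagonal d * Qᴴ + Q * (U * Vᴴ) * Qᴴ by
          rw [mul_add, add_mul], submatrix_add, Pi.add_apply, Pi.add_apply, hD, hUV]
        exact (rank_add_le _ _).trans
          (add_le_add (rank_vecMulVec_le _ _) (rank_mul_le_left _ _))
    _ ≤ Fintype.card κ := by omega

end Matrix

theorem IsGivensAt.isIdentityOutside {n i : ℕ} {c : ℝ} {s : ℂ} {G : Matrix (Fin n) (Fin n) ℂ}
    (hG : IsGivensAt i c s G) :
    G.IsIdentityOutside {p : Fin n | (p : ℕ) = i ∨ (p : ℕ) = i + 1} := by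
  intro p q hpq
  simp only [Set.mem_ofPred_eq] at hpq
  rw [hG.2.2, one_apply]
  split_ifs <;> simp_all

theorem isIdentityOutside_prod_givens {n : ℕ} {c : ℕ → ℝ} {s : ℕ → ℂ}
    {G : ℕ → Matrix (Fin n) (Fin n) ℂ}
    (hG : ∀ i, 1 ≤ i → i ≤ n - 2 → IsGivensAt i (c i) (s i) (G i)) {a m : ℕ} (ha : 1 ≤ a)
    (hm : a + m ≤ n - 1) :
    (((List.range m).map fun j => G (a + j)).prod).IsIdentityOutside
      {p : Fin n | a ≤ (p : ℕ) ∧ (p : ℕ) ≤ a + m} := by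
  refine IsIdentityOutside.list_prod fun M hM => ?_
  obtain ⟨j, hj, rfl⟩ := List.mem_map.mp hM
  rw [List.mem_range] at hj
  exact (hG (a + j) (by omega) (by omega)).isIdentityOutside.mono fun p hp => by
    simp only [Set.mem_ofPred_eq] at hp ⊢
    omega

theorem exists_prod_givens_eq_mul {n : ℕ} {c : ℕ → ℝ} {s : ℕ → ℂ}
    {G : ℕ → Matrix (Fin n) (Fin n) ℂ}
    (hG : ∀ i, 1 ≤ i → i ≤ n - 2 → IsGivensAt i (c i) (s i) (G i)) {t : Fin n}
    (ht : 1 ≤ (t : ℕ)) :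
    ∃ L R : Matrix (Fin n) (Fin n) ℂ,
      ((List.range (n - 2)).map fun j => G (1 + j)).prod = L * R ∧
        L.IsIdentityOutside (Set.Iic t) ∧ R.IsIdentityOutside (Set.Ici t) := by
  have htn := t.isLt
  refine ⟨((List.range (t - 1)).map fun j => G (1 + j)).prod,
    ((List.range (n - 1 - t)).map fun j => G (t + j)).prod, ?_, ?_, ?_⟩
  · rw [show n - 2 = (t - 1) + (n - 1 - t) by omega, List.range_add, List.map_append,
      List.prod_append, List.map_map]
    congr 3
    funext j
    simp only [Function.comp_apply]
    congr 1
    omega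
  · refine (isIdentityOutside_prod_givens hG le_rfl (by omega)).mono fun p hp => ?_
    simp only [Set.mem_ofPred_eq, Set.mem_Iic, Fin.le_def] at hp ⊢
    omega
  · refine (isIdentityOutside_prod_givens hG ht (by omega)).mono fun p hp => ?_
    simp only [Set.mem_ofPred_eq, Set.mem_Ici, Fin.le_def] at hp ⊢
    omega

/-- Second part of Theorem 3.3 of the paper (0-indexed): the trailing
principal submatrix `Â₁ = (Q₁AQ₁ᴴ)[2:n, 2:n]` of size `n-1` is
lower-quasiseparable of rank `k`. -/
theorem stmt_17 (n k : ℕ) (hn : 3 ≤ n)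
    (dd : Fin n → ℝ) (U V : Matrix (Fin n) (Fin k) ℂ)
    (A : Matrix (Fin n) (Fin n) ℂ)
    (hA : A = Matrix.diagonal (fun i => (dd i : ℂ)) + U * Vᴴ)
    (hcol : ∃ i : Fin n, 2 ≤ (i : ℕ) ∧ A i ⟨0, by omega⟩ ≠ 0)
    (c : ℕ → ℝ) (s : ℕ → ℂ) (G : ℕ → Matrix (Fin n) (Fin n) ℂ)
    (hG : ∀ i, 1 ≤ i → i ≤ n - 2 → IsGivensAt i (c i) (s i) (G i))
    (Q₁ : Matrix (Fin n) (Fin n) ℂ)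
    (hQ₁ : Q₁ = ((List.range (n - 2)).map (fun j => G (1 + j))).prod)
    (α β : ℂ)
    (hQA : ∀ p : Fin n, (Q₁ * A) p ⟨0, by omega⟩ =
      if (p : ℕ) = 0 then α else if (p : ℕ) = 1 then β else 0) :
    lowQS k (Matrix.of fun (p q : Fin (n - 1)) =>
      (Q₁ * A * Q₁ᴴ) ⟨(p : ℕ) + 1, by have := p.2; omega⟩
                     ⟨(q : ℕ) + 1, by have := q.2; omega⟩) := by
  obtain ⟨i₀, hi₀, hAi₀⟩ := hcol
  set z : Fin n := ⟨0, by omega⟩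
  have hV : V z ≠ 0 := by
    intro hVz
    apply hAi₀
    rw [hA, Matrix.add_apply, diagonal_apply_ne _ (Fin.ne_of_val_ne (by simp [z]; omega)),
      mul_apply]
    simp [hVz]
  have hQ₁_block : Q₁.IsIdentityOutside {p : Fin n | 1 ≤ (p : ℕ) ∧ (p : ℕ) ≤ 1 + (n - 2)} :=
    hQ₁ ▸ isIdentityOutside_prod_givens hG le_rfl (by omega)
  have hQUV : ∀ r : Fin n, 2 ≤ (r : ℕ) → (Q₁ * (U * Vᴴ)) r z = 0 := by
    intro r hr
    have hQz : Q₁ r z = 0 := by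
      rw [hQ₁_block r z (Or.inr (by simp [z])),
        one_apply_ne (Fin.ne_of_val_ne (by simp [z]; omega))]
    rw [show U * Vᴴ = A - diagonal (fun i => (dd i : ℂ)) by rw [hA, add_sub_cancel_left],
      mul_sub, Matrix.sub_apply, hQA r, mul_diagonal, hQz]
    simp only [zero_mul, sub_zero]
    rw [if_neg (by omega), if_neg (by omega)]
  intro i hi him
  obtain ⟨L, R, hLR, hL, hR⟩ := exists_prod_givens_eq_mul hG (t := ⟨i, by omega⟩) hi
  change ((Q₁ * A * Q₁ᴴ).submatrix (fun p : Fin (n - 1 - i) => (⟨i + p + 1, by omega⟩ : Fin n))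
    (fun q : Fin i => ⟨q + 1, by omega⟩)).rank ≤ k
  rw [hA]
  exact (rank_submatrix_mul_diagonal_add_mul_conjTranspose_le (hQ₁.trans hLR) hL hR _ U V
    (fun p => Fin.mk_lt_mk.mpr (by omega)) (fun q => Fin.mk_le_mk.mpr (by omega)) hV
    (fun p => hQUV _ (by simp only; omega))).trans_eq (Fintype.card_fin k)
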